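/- Minimax rate for iterate-averaged 3DVAR in the diagonal case (second regime): under the diagonal setup, fix γ > 0 and α > 0, suppose Σ_{i=1}^∞ i^{2β} v_{0,i}² < ∞, and assume τ̄_b := (t(1+2ε) + 2β)/(2(1 + 2ε + 2p)) > 1 and τ̄_v := (t(1+2ε) + 2ε)/(1 + 2ε + 2p) > 1. Then there exists a constant C > 0 such that for every n ≥ 1, B_n(α) + V_n(α) ≤ C n^{−1}. -/

import Mathlib

open Finset

/-- `q_{n,α}(λ) = λ⁻¹ (1 − (α/(α+λ))^n)`. -/
noncomputable def qFun (n : ℕ) (α l : ℝ) : ℝ := l⁻¹ * (1 - (α / (α + l)) ^ n)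

/-- Squared bias of iterate-averaged 3DVAR in the diagonal case (sequences are 1-based):
`B_n(α) = (α/n)² Σ_{i≥1} σ_i^t q_{n,α}(σ_i a_i²)² v_{0,i}²`. -/
noncomputable def Bterm (σ a v0 : ℕ → ℝ) (t : ℝ) (α : ℝ) (n : ℕ) : ℝ :=
  (α / (n : ℝ)) ^ 2 *
    ∑' i : ℕ, (σ (i + 1)) ^ t * (qFun n α (σ (i + 1) * (a (i + 1)) ^ 2)) ^ 2 * (v0 (i + 1)) ^ 2

/-- Variance term of iterate-averaged 3DVAR in the diagonal case (sequences are 1-based):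
`V_n(α) = (γ²/n²) Σ_{j=1}^n Σ_{i≥1} σ_i^{t+2} a_i² q_{j,α}(σ_i a_i²)²`. -/
noncomputable def Vterm (σ a : ℕ → ℝ) (t γ : ℝ) (α : ℝ) (n : ℕ) : ℝ :=
  (γ ^ 2 / (n : ℝ) ^ 2) *
    ∑ j ∈ Icc 1 n, ∑' i : ℕ,
      (σ (i + 1)) ^ (t + 2) * (a (i + 1)) ^ 2 * (qFun j α (σ (i + 1) * (a (i + 1)) ^ 2)) ^ 2

/-!
Both terms are controlled by the uniform bound `0 ≤ q_{n,α}(λ) ≤ λ⁻¹`, with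
`λ_i = σ_i a_i² ≳ i^{-(1+2ε+2p)}`. Hence the `i`-th term of the bias series is at most a constant
times `i^{2(1+2ε+2p) - t(1+2ε)} v_{0,i}² ≤ i^{2β} v_{0,i}²` (this is `τ̄_b ≥ 1`), so `B_n = O(n⁻²)`.
For the variance, `σ_i^{t+2} a_i² q² ≤ σ_i^t a_i⁻² ≲ i^{2p - t(1+2ε)}`, which is summable
exactly when `τ̄_v > 1`; the `n` inner series are then uniformly bounded and `V_n = O(n⁻¹)`.
-/

section PowerLaw

variable {x c d e f y z : ℝ}

lemma rpow_le_of_le_mul_rpow (hx : 0 < x) (hc : 0 ≤ c) (hy : 0 ≤ y) (h : y ≤ c * x ^ e)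
    {t : ℝ} (ht : 0 ≤ t) : y ^ t ≤ c ^ t * x ^ (e * t) := by
  rw [Real.rpow_mul hx.le, ← Real.mul_rpow hc (by positivity)]
  exact Real.rpow_le_rpow hy h ht

lemma pow_le_of_le_mul_rpow (hx : 0 < x) (hy : 0 ≤ y) (h : y ≤ c * x ^ e) (k : ℕ) :
    y ^ k ≤ c ^ k * x ^ (e * k) := by
  rw [Real.rpow_mul_natCast hx.le, ← mul_pow]
  exact pow_le_pow_left₀ hy h k

lemma inv_le_of_mul_rpow_le (hx : 0 < x) (hc : 0 < c) (h : c * x ^ e ≤ y) :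
    y⁻¹ ≤ c⁻¹ * x ^ (-e) := by
  rw [Real.rpow_neg hx.le, ← mul_inv]
  exact inv_anti₀ (by positivity) h

lemma mul_le_of_le_mul_rpow (hx : 0 < x) (hc : 0 ≤ c) (hy : y ≤ c * x ^ e) (hz0 : 0 ≤ z)
    (hz : z ≤ d * x ^ f) : y * z ≤ c * d * x ^ (e + f) := by
  rw [Real.rpow_add hx]
  calc y * z ≤ (c * x ^ e) * (d * x ^ f) := mul_le_mul hy hz hz0 (by positivity)
    _ = c * d * (x ^ e * x ^ f) := by ring

end PowerLaw

section qFun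

variable {n : ℕ} {α l σ a t : ℝ}

lemma qFun_nonneg (hα : 0 ≤ α) (hl : 0 < l) : 0 ≤ qFun n α l := by
  have hr : α / (α + l) ≤ 1 := div_le_one_of_le₀ (by linarith) (by positivity)
  exact mul_nonneg (by positivity) (sub_nonneg.2 (pow_le_one₀ (by positivity) hr))

lemma qFun_le_inv (hα : 0 ≤ α) (hl : 0 < l) : qFun n α l ≤ l⁻¹ :=
  mul_le_of_le_one_right (by positivity) (sub_le_self _ (by positivity))

lemma qFun_sq_le_inv_sq (hα : 0 ≤ α) (hl : 0 < l) : qFun n α l ^ 2 ≤ l⁻¹ ^ 2 :=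
  pow_le_pow_left₀ (qFun_nonneg hα hl) (qFun_le_inv hα hl) 2

lemma rpow_mul_qFun_sq_le (hα : 0 ≤ α) (hσ : 0 < σ) (ha : 0 < a) :
    σ ^ t * qFun n α (σ * a ^ 2) ^ 2 ≤ σ ^ t * σ⁻¹ ^ 2 * a⁻¹ ^ 4 := by
  calc σ ^ t * qFun n α (σ * a ^ 2) ^ 2 ≤ σ ^ t * (σ * a ^ 2)⁻¹ ^ 2 := by
        gcongr _ * ?_; exact qFun_sq_le_inv_sq hα (by positivity)
    _ = σ ^ t * σ⁻¹ ^ 2 * a⁻¹ ^ 4 := by ring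

lemma rpow_add_two_mul_sq_mul_qFun_sq_le (hα : 0 ≤ α) (hσ : 0 < σ) (ha : 0 < a) :
    σ ^ (t + 2) * a ^ 2 * qFun n α (σ * a ^ 2) ^ 2 ≤ σ ^ t * a⁻¹ ^ 2 := by
  calc σ ^ (t + 2) * a ^ 2 * qFun n α (σ * a ^ 2) ^ 2
      ≤ σ ^ (t + 2) * a ^ 2 * (σ * a ^ 2)⁻¹ ^ 2 := by
        gcongr _ * ?_; exact qFun_sq_le_inv_sq hα (by positivity)
    _ = σ ^ t * a⁻¹ ^ 2 := by
        rw [Real.rpow_add hσ, Real.rpow_two]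
        field_simp

end qFun

section Summands

variable {n : ℕ} {α t x r s c₁ c₂ σ a : ℝ}

lemma rpow_mul_qFun_sq_le_mul_rpow {b : ℝ} (hα : 0 ≤ α) (ht : 0 ≤ t) (hx : 1 ≤ x)
    (hc₁ : 0 < c₁) (hc₂ : 0 ≤ c₂) (hσl : c₁ * x ^ r ≤ σ) (hσu : σ ≤ c₂ * x ^ r)
    (hal : c₁ * x ^ s ≤ a) (hb : r * t - 2 * r - 4 * s ≤ b) :
    σ ^ t * qFun n α (σ * a ^ 2) ^ 2 ≤ c₂ ^ t * c₁⁻¹ ^ 2 * c₁⁻¹ ^ 4 * x ^ b := by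
  have hx0 : 0 < x := one_pos.trans_le hx
  have hσ : 0 < σ := (by positivity : 0 < c₁ * x ^ r).trans_le hσl
  have ha : 0 < a := (by positivity : 0 < c₁ * x ^ s).trans_le hal
  have hσt := rpow_le_of_le_mul_rpow hx0 hc₂ hσ.le hσu ht
  have hσinv := pow_le_of_le_mul_rpow hx0 (by positivity) (inv_le_of_mul_rpow_le hx0 hc₁ hσl) 2
  have hainv := pow_le_of_le_mul_rpow hx0 (by positivity) (inv_le_of_mul_rpow_le hx0 hc₁ hal) 4
  calc σ ^ t * qFun n α (σ * a ^ 2) ^ 2 ≤ σ ^ t * σ⁻¹ ^ 2 * a⁻¹ ^ 4 :=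
        rpow_mul_qFun_sq_le hα hσ ha
    _ ≤ c₂ ^ t * c₁⁻¹ ^ 2 * c₁⁻¹ ^ 4 * x ^ (r * t + -r * 2 + -s * 4) :=
        mul_le_of_le_mul_rpow hx0 (by positivity)
          (mul_le_of_le_mul_rpow hx0 (by positivity) hσt (by positivity) hσinv)
          (by positivity) hainv
    _ ≤ c₂ ^ t * c₁⁻¹ ^ 2 * c₁⁻¹ ^ 4 * x ^ b := by
        gcongr
        linarith

lemma rpow_add_two_mul_sq_mul_qFun_sq_le_mul_rpow (hα : 0 ≤ α) (ht : 0 ≤ t) (hx : 0 < x)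
    (hc₁ : 0 < c₁) (hc₂ : 0 ≤ c₂) (hσl : c₁ * x ^ r ≤ σ) (hσu : σ ≤ c₂ * x ^ r)
    (hal : c₁ * x ^ s ≤ a) :
    σ ^ (t + 2) * a ^ 2 * qFun n α (σ * a ^ 2) ^ 2 ≤ c₂ ^ t * c₁⁻¹ ^ 2 * x ^ (r * t - 2 * s) := by
  have hσ : 0 < σ := (by positivity : 0 < c₁ * x ^ r).trans_le hσl
  have ha : 0 < a := (by positivity : 0 < c₁ * x ^ s).trans_le hal
  calc σ ^ (t + 2) * a ^ 2 * qFun n α (σ * a ^ 2) ^ 2 ≤ σ ^ t * a⁻¹ ^ 2 :=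
        rpow_add_two_mul_sq_mul_qFun_sq_le hα hσ ha
    _ ≤ c₂ ^ t * c₁⁻¹ ^ 2 * x ^ (r * t + -s * 2) :=
        mul_le_of_le_mul_rpow hx (by positivity) (rpow_le_of_le_mul_rpow hx hc₂ hσ.le hσu ht)
          (by positivity)
          (pow_le_of_le_mul_rpow hx (by positivity) (inv_le_of_mul_rpow_le hx hc₁ hal) 2)
    _ = c₂ ^ t * c₁⁻¹ ^ 2 * x ^ (r * t - 2 * s) := by ring_nf

end Summands

lemma tsum_le_mul_tsum_of_le_mul {ι : Type*} {f g : ι → ℝ} {K : ℝ} (hf : ∀ i, 0 ≤ f i)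
    (hfg : ∀ i, f i ≤ K * g i) (hg : Summable g) : ∑' i, f i ≤ K * ∑' i, g i := by
  rw [← tsum_mul_left]
  exact ((hg.mul_left K).of_nonneg_of_le hf hfg).tsum_le_tsum hfg (hg.mul_left K)

lemma Bterm_le_of_tsum_le {σ a v0 : ℕ → ℝ} {t α M : ℝ} {n : ℕ} (hM : 0 ≤ M)
    (h : ∑' i, σ (i + 1) ^ t * qFun n α (σ (i + 1) * a (i + 1) ^ 2) ^ 2 * v0 (i + 1) ^ 2 ≤ M) :
    Bterm σ a v0 t α n ≤ α ^ 2 * M * (n : ℝ)⁻¹ := by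
  unfold Bterm
  calc _ ≤ (α / n) ^ 2 * M := by gcongr
    _ = α ^ 2 * M * (n : ℝ)⁻¹ * (n : ℝ)⁻¹ := by ring
    _ ≤ α ^ 2 * M * (n : ℝ)⁻¹ := mul_le_of_le_one_right (by positivity) (Nat.cast_inv_le_one n)

lemma Vterm_le_of_tsum_le {σ a : ℕ → ℝ} {t γ α M : ℝ} {n : ℕ}
    (h : ∀ j, ∑' i, σ (i + 1) ^ (t + 2) * a (i + 1) ^ 2 * qFun j α (σ (i + 1) * a (i + 1) ^ 2) ^ 2
      ≤ M) :
    Vterm σ a t γ α n ≤ γ ^ 2 * M * (n : ℝ)⁻¹ := by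
  unfold Vterm
  calc _ ≤ γ ^ 2 / (n : ℝ) ^ 2 * (n * M) := by
        gcongr
        simpa using Finset.sum_le_card_nsmul (Icc 1 n) _ M fun j _ => h j
    _ = γ ^ 2 * M * (n : ℝ)⁻¹ := by
        rcases eq_or_ne (n : ℝ) 0 with hn | hn
        · simp [hn]
        · field_simp

section Series

variable {σ a : ℕ → ℝ} {α t r s c₁ c₂ : ℝ}

lemma tsum_bias_summand_le {v0 : ℕ → ℝ} {b : ℝ} (hα : 0 ≤ α) (ht : 0 ≤ t) (hc₁ : 0 < c₁)
    (hc₂ : 0 ≤ c₂)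
    (hσ : ∀ i : ℕ, c₁ * ((i : ℝ) + 1) ^ r ≤ σ (i + 1) ∧ σ (i + 1) ≤ c₂ * ((i : ℝ) + 1) ^ r)
    (ha : ∀ i : ℕ, c₁ * ((i : ℝ) + 1) ^ s ≤ a (i + 1)) (hb : r * t - 2 * r - 4 * s ≤ b)
    (hv : Summable fun i : ℕ => ((i : ℝ) + 1) ^ b * v0 (i + 1) ^ 2) (n : ℕ) :
    ∑' i, σ (i + 1) ^ t * qFun n α (σ (i + 1) * a (i + 1) ^ 2) ^ 2 * v0 (i + 1) ^ 2
      ≤ c₂ ^ t * c₁⁻¹ ^ 2 * c₁⁻¹ ^ 4 * ∑' i : ℕ, ((i : ℝ) + 1) ^ b * v0 (i + 1) ^ 2 := by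
  refine tsum_le_mul_tsum_of_le_mul (fun i => ?_) (fun i => ?_) hv
  · have := le_trans (by positivity) (hσ i).1
    positivity
  · rw [← mul_assoc]
    exact mul_le_mul_of_nonneg_right (rpow_mul_qFun_sq_le_mul_rpow hα ht (by simp) hc₁ hc₂
      (hσ i).1 (hσ i).2 (ha i) hb) (sq_nonneg _)

lemma tsum_variance_summand_le (hα : 0 ≤ α) (ht : 0 ≤ t) (hc₁ : 0 < c₁) (hc₂ : 0 ≤ c₂)
    (hσ : ∀ i : ℕ, c₁ * ((i : ℝ) + 1) ^ r ≤ σ (i + 1) ∧ σ (i + 1) ≤ c₂ * ((i : ℝ) + 1) ^ r)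
    (ha : ∀ i : ℕ, c₁ * ((i : ℝ) + 1) ^ s ≤ a (i + 1)) (he : r * t - 2 * s < -1) (j : ℕ) :
    ∑' i, σ (i + 1) ^ (t + 2) * a (i + 1) ^ 2 * qFun j α (σ (i + 1) * a (i + 1) ^ 2) ^ 2
      ≤ c₂ ^ t * c₁⁻¹ ^ 2 * ∑' i : ℕ, ((i : ℝ) + 1) ^ (r * t - 2 * s) := by
  refine tsum_le_mul_tsum_of_le_mul (fun i => ?_)
    (fun i => rpow_add_two_mul_sq_mul_qFun_sq_le_mul_rpow hα ht (by positivity) hc₁ hc₂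
      (hσ i).1 (hσ i).2 (ha i)) ?_
  · have := le_trans (by positivity) (hσ i).1
    positivity
  · exact_mod_cast (summable_nat_add_iff 1).mpr (Real.summable_nat_rpow.mpr he)

end Series

theorem diagonal_minimax_second_regime_general
    (ε p α t β γ : ℝ) (hε : 0 < ε) (hp : 0 < p) (hα : 0 < α) (ht : 0 ≤ t)
    (σ a v0 : ℕ → ℝ) (c₁ c₂ : ℝ) (hc₁ : 0 < c₁) (hc₁₂ : c₁ ≤ c₂)
    (hσ : ∀ i : ℕ, 1 ≤ i → c₁ * (i : ℝ) ^ (-1 - 2 * ε) ≤ σ i ∧ σ i ≤ c₂ * (i : ℝ) ^ (-1 - 2 * ε))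
    (ha : ∀ i : ℕ, 1 ≤ i → c₁ * (i : ℝ) ^ (-p) ≤ a i ∧ a i ≤ c₂ * (i : ℝ) ^ (-p))
    (hv : Summable (fun i : ℕ => ((i : ℝ) + 1) ^ (2 * β) * (v0 (i + 1)) ^ 2))
    (hτb : 1 < (t * (1 + 2 * ε) + 2 * β) / (2 * (1 + 2 * ε + 2 * p)))
    (hτv : 1 < (t * (1 + 2 * ε) + 2 * ε) / (1 + 2 * ε + 2 * p)) :
    ∃ C : ℝ, 0 < C ∧ ∀ n : ℕ, 1 ≤ n →
      Bterm σ a v0 t α n + Vterm σ a t γ α n ≤ C * (n : ℝ)⁻¹ := by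
  have hc₂ : 0 ≤ c₂ := hc₁.le.trans hc₁₂
  have hbias_exp : (-1 - 2 * ε) * t - 2 * (-1 - 2 * ε) - 4 * -p ≤ 2 * β := by
    rw [one_lt_div (by positivity)] at hτb; linarith
  have hvar_exp : (-1 - 2 * ε) * t - 2 * -p < -1 := by
    rw [one_lt_div (by positivity)] at hτv; linarith
  have hσ' (i : ℕ) := hσ (i + 1) i.succ_pos
  have ha' (i : ℕ) := (ha (i + 1) i.succ_pos).1
  push_cast at hσ' ha'
  have hB := tsum_bias_summand_le hα.le ht hc₁ hc₂ hσ' ha' hbias_exp hv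
  have hV := tsum_variance_summand_le hα.le ht hc₁ hc₂ hσ' ha' hvar_exp
  set Mb := c₂ ^ t * c₁⁻¹ ^ 2 * c₁⁻¹ ^ 4 * ∑' i : ℕ, ((i : ℝ) + 1) ^ (2 * β) * v0 (i + 1) ^ 2
  set Mv := c₂ ^ t * c₁⁻¹ ^ 2 * ∑' i : ℕ, ((i : ℝ) + 1) ^ ((-1 - 2 * ε) * t - 2 * -p)
  have hMb : 0 ≤ Mb := by positivity
  have hMv : 0 ≤ Mv := by positivity
  refine ⟨α ^ 2 * Mb + γ ^ 2 * Mv + 1, by positivity, fun n _ => ?_⟩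
  have hn : 0 ≤ (n : ℝ)⁻¹ := by positivity
  nlinarith [Bterm_le_of_tsum_le (v0 := v0) hMb (hB n), Vterm_le_of_tsum_le (γ := γ) (n := n) hV]

/-- Minimax rate for iterate-averaged 3DVAR in the diagonal case (second regime
`τ̄_b > 1`, `τ̄_v > 1`): for any fixed `α > 0`, `B_n(α) + V_n(α) ≤ C n⁻¹`. -/
theorem diagonal_minimax_second_regime
    (ε p α t β γ : ℝ) (hε : 0 < ε) (hp : 0 < p) (hα : 0 < α) (ht : 0 ≤ t) (hβ : 0 ≤ β)
    (hγ : 0 < γ)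
    (σ a v0 : ℕ → ℝ) (c₁ c₂ : ℝ) (hc₁ : 0 < c₁) (hc₁₂ : c₁ ≤ c₂)
    (hσ : ∀ i : ℕ, 1 ≤ i → c₁ * (i : ℝ) ^ (-1 - 2 * ε) ≤ σ i ∧ σ i ≤ c₂ * (i : ℝ) ^ (-1 - 2 * ε))
    (ha : ∀ i : ℕ, 1 ≤ i → c₁ * (i : ℝ) ^ (-p) ≤ a i ∧ a i ≤ c₂ * (i : ℝ) ^ (-p))
    (hv : Summable (fun i : ℕ => ((i : ℝ) + 1) ^ (2 * β) * (v0 (i + 1)) ^ 2))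
    (hτb : 1 < (t * (1 + 2 * ε) + 2 * β) / (2 * (1 + 2 * ε + 2 * p)))
    (hτv : 1 < (t * (1 + 2 * ε) + 2 * ε) / (1 + 2 * ε + 2 * p)) :
    ∃ C : ℝ, 0 < C ∧ ∀ n : ℕ, 1 ≤ n →
      Bterm σ a v0 t α n + Vterm σ a t γ α n ≤ C * (n : ℝ)⁻¹ :=
  diagonal_minimax_second_regime_general ε p α t β γ hε hp hα ht σ a v0 c₁ c₂ hc₁ hc₁₂ hσ ha hv hτb
    hτv
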